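/- (One-variable case of Lemma 2.3.) Let I ≥ 1, J ≥ 0, K ≥ 0 be integers with J + K ≥ 1, and let λ ∈ ℂ. Then for all z ∈ ℂ \ {0}, |z^I|^{2λ} / (z^J · z̄^K) = (h(λ)/λ^p) · ∂^{J+K}/∂z^J ∂z̄^K (|z^I|^{2λ}), where p = (1 if J ≠ 0 else 0) + (1 if K ≠ 0 else 0), and h(λ)^{-1} = [I(λI−1)(λI−2)⋯(λI−J+1)] · [I(λI−1)(λI−2)⋯(λI−K+1)] (each bracket taken to be 1 when the corresponding exponent J or K is 0), provided λ is such that h(λ)^{-1} ≠ 0. -/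

import Mathlib

open MeasureTheory Complex Filter

/-- The Wirtinger derivative ∂/∂z = (∂/∂x − i∂/∂y)/2. -/
noncomputable def wdz (f : ℂ → ℂ) (z : ℂ) : ℂ :=
  (fderiv ℝ f z 1 - Complex.I * fderiv ℝ f z Complex.I) / 2

/-- The conjugate Wirtinger derivative ∂/∂z̄ = (∂/∂x + i∂/∂y)/2. -/
noncomputable def wdzbar (f : ℂ → ℂ) (z : ℂ) : ℂ :=
  (fderiv ℝ f z 1 + Complex.I * fderiv ℝ f z Complex.I) / 2

/-!
With `μ = λ I` one has `|z^I|^{2λ} = |z|^{2μ}`, and the functions `c |w|^{2μ} w^a w̄^b`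
on `ℂ \ {0}` are stable under the Wirtinger derivatives: `∂` multiplies the coefficient by
`μ + a` and lowers `a`, `∂̄` multiplies it by `μ + b` and lowers `b`. So `∂^J ∂̄^K |z|^{2μ}` is
`μ(μ-1)⋯(μ-J+1) · μ(μ-1)⋯(μ-K+1) · |z|^{2μ} z^{-J} z̄^{-K}`, and each descending product
is `λ` times the corresponding factor of `h(λ)⁻¹` (or `1` when it is empty).
-/

open Set ComplexConjugate

noncomputable def wirtingerCLM (A B : ℂ) : ℂ →L[ℝ] ℂ :=
  A • ContinuousLinearMap.id ℝ ℂ + B • (conjCLE : ℂ →L[ℝ] ℂ)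

@[simp]
lemma wirtingerCLM_apply (A B v : ℂ) : wirtingerCLM A B v = A * v + B * conj v := rfl

lemma wdz_eq_of_hasFDerivAt {f : ℂ → ℂ} {A B z : ℂ}
    (hf : HasFDerivAt f (wirtingerCLM A B) z) :
    wdz f z = A := by
  rw [wdz, hf.fderiv]
  simp only [wirtingerCLM_apply, map_one, conj_I]
  linear_combination (B - A) / 2 * I_sq

lemma wdzbar_eq_of_hasFDerivAt {f : ℂ → ℂ} {A B z : ℂ}
    (hf : HasFDerivAt f (wirtingerCLM A B) z) :
    wdzbar f z = B := by
  rw [wdzbar, hf.fderiv]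
  simp only [wirtingerCLM_apply, map_one, conj_I]
  linear_combination (A - B) / 2 * I_sq

lemma Filter.EventuallyEq.wdz_eq {f g : ℂ → ℂ} {z : ℂ} (h : f =ᶠ[nhds z] g) :
    wdz f z = wdz g z := by
  rw [wdz, wdz, h.fderiv_eq]

lemma Filter.EventuallyEq.wdzbar_eq {f g : ℂ → ℂ} {z : ℂ} (h : f =ᶠ[nhds z] g) :
    wdzbar f z = wdzbar g z := by
  rw [wdzbar, wdzbar, h.fderiv_eq]

lemma hasFDerivAt_ofReal_log_normSq {w : ℂ} (hw : w ≠ 0) :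
    HasFDerivAt (fun w => (Real.log (normSq w) : ℂ)) (wirtingerCLM w⁻¹ (conj w)⁻¹) w := by
  have hnormSq : HasFDerivAt (fun w : ℂ => normSq w) (2 • innerSL ℝ w) w := by
    simpa only [← normSq_eq_norm_sq] using (hasStrictFDerivAt_norm_sq w).hasFDerivAt
  have hlog := ofRealCLM.hasFDerivAt.comp w
    ((Real.hasDerivAt_log (normSq_pos.2 hw).ne').comp_hasFDerivAt w hnormSq)
  refine hlog.congr_fderiv (ContinuousLinearMap.ext fun v => ?_)
  have hw' : conj w ≠ 0 := by simpa using hw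
  have hre : 2 * ((v * conj w).re : ℂ) = v * conj w + conj v * w := by
    refine Complex.ext ?_ ?_ <;> simp <;> ring
  simp only [ContinuousLinearMap.comp_apply, smul_apply, innerSL_apply_apply,
    Complex.inner, ofRealCLM_apply, smul_eq_mul, nsmul_eq_mul, wirtingerCLM_apply, ofReal_mul,
    ofReal_inv, Nat.cast_ofNat, ofReal_ofNat, hre, ← mul_conj]
  field_simp

/-- `c |w|^{2μ} w^a w̄^b`, with `|w|^{2μ}` written as `exp (μ log |w|²)`. -/
noncomputable def normSqPowMonomial (c μ : ℂ) (a b : ℤ) (w : ℂ) : ℂ :=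
  c * exp (μ * Real.log (normSq w)) * w ^ a * conj w ^ b

lemma hasFDerivAt_normSqPowMonomial (c μ : ℂ) (a b : ℤ) {w : ℂ} (hw : w ≠ 0) :
    HasFDerivAt (normSqPowMonomial c μ a b)
      (wirtingerCLM (normSqPowMonomial (c * (μ + a)) μ (a - 1) b w)
        (normSqPowMonomial (c * (μ + b)) μ a (b - 1) w)) w := by
  have hw' : conj w ≠ 0 := by simpa using hw
  have hexp := (((hasFDerivAt_ofReal_log_normSq hw).const_mul μ).cexp).const_mul c
  have hpow := ((hasDerivAt_zpow a w (Or.inl hw)).hasFDerivAt).restrictScalars ℝ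
  have hpow_conj :=
    (((hasDerivAt_zpow b (conj w) (Or.inl hw')).hasFDerivAt).restrictScalars ℝ).comp w
      conjCLE.hasFDerivAt
  refine ((hexp.mul hpow).mul hpow_conj).congr_fderiv (ContinuousLinearMap.ext fun v => ?_)
  simp only [normSqPowMonomial, zpow_sub_one₀ hw, zpow_sub_one₀ hw', Pi.mul_apply,
    Function.comp_apply, add_apply, smul_apply, ContinuousLinearMap.comp_apply,
    ContinuousLinearEquiv.coe_coe, ContinuousAlgEquiv.coeCLE_apply, conjCAE_apply,
    ContinuousLinearMap.coe_restrictScalars', ContinuousLinearMap.toSpanSingleton_apply,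
    smul_eq_mul, wirtingerCLM_apply]
  field_simp
  ring

lemma wdz_normSqPowMonomial (c μ : ℂ) (a b : ℤ) {w : ℂ} (hw : w ≠ 0) :
    wdz (normSqPowMonomial c μ a b) w = normSqPowMonomial (c * (μ + a)) μ (a - 1) b w :=
  wdz_eq_of_hasFDerivAt (hasFDerivAt_normSqPowMonomial c μ a b hw)

lemma wdzbar_normSqPowMonomial (c μ : ℂ) (a b : ℤ) {w : ℂ} (hw : w ≠ 0) :
    wdzbar (normSqPowMonomial c μ a b) w = normSqPowMonomial (c * (μ + b)) μ a (b - 1) w :=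
  wdzbar_eq_of_hasFDerivAt (hasFDerivAt_normSqPowMonomial c μ a b hw)

lemma eqOn_iterate_wdz {f : ℂ → ℂ} {c μ : ℂ} {a b : ℤ}
    (hf : EqOn f (normSqPowMonomial c μ a b) {0}ᶜ) (n : ℕ) :
    EqOn (wdz^[n] f)
      (normSqPowMonomial (c * ∏ j ∈ Finset.range n, (μ + a - j)) μ (a - n) b) {0}ᶜ := by
  induction n with
  | zero => simpa using hf
  | succ n ih =>
    intro w hw
    rw [Function.iterate_succ_apply',
      (ih.eventuallyEq_of_mem (isOpen_compl_singleton.mem_nhds hw)).wdz_eq,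
      wdz_normSqPowMonomial _ _ _ _ hw, Finset.prod_range_succ]
    push_cast
    ring_nf

lemma eqOn_iterate_wdzbar {f : ℂ → ℂ} {c μ : ℂ} {a b : ℤ}
    (hf : EqOn f (normSqPowMonomial c μ a b) {0}ᶜ) (n : ℕ) :
    EqOn (wdzbar^[n] f)
      (normSqPowMonomial (c * ∏ j ∈ Finset.range n, (μ + b - j)) μ a (b - n)) {0}ᶜ := by
  induction n with
  | zero => simpa using hf
  | succ n ih =>
    intro w hw
    rw [Function.iterate_succ_apply',
      (ih.eventuallyEq_of_mem (isOpen_compl_singleton.mem_nhds hw)).wdzbar_eq,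
      wdzbar_normSqPowMonomial _ _ _ _ hw, Finset.prod_range_succ]
    push_cast
    ring_nf

lemma prod_range_sub_natCast {R : Type*} [CommRing R] (x : R) {n : ℕ} (hn : n ≠ 0) :
    ∏ j ∈ Finset.range n, (x - j) = x * ∏ j ∈ Finset.Icc 1 (n - 1), (x - j) := by
  rw [Finset.prod_range_eq_mul_Ico _ (Nat.pos_of_ne_zero hn), Nat.cast_zero, sub_zero,
    Finset.Icc_sub_one_right_eq_Ico_of_not_isMin (by simpa using hn)]

theorem stmt2_general (I J K : ℕ) (lam : ℂ) (hlam : lam ≠ 0)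
    (hinv : ℂ)
    (hdef : hinv =
      (if J = 0 then 1 else (I : ℂ) * ∏ j ∈ Finset.Icc 1 (J - 1), (lam * I - (j : ℂ))) *
      (if K = 0 then 1 else (I : ℂ) * ∏ j ∈ Finset.Icc 1 (K - 1), (lam * I - (j : ℂ))))
    (hne : hinv ≠ 0) (z : ℂ) (hz : z ≠ 0) :
    Complex.exp (lam * Real.log (‖z ^ I‖ ^ 2)) / (z ^ J * (starRingEnd ℂ z) ^ K)
      = hinv⁻¹ / lam ^ (((if J = 0 then 0 else 1) + (if K = 0 then 0 else 1) : ℕ)) *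
        (wdz^[J] (wdzbar^[K]
          (fun w => Complex.exp (lam * Real.log (‖w ^ I‖ ^ 2))))) z := by
  have hf : EqOn (fun w => exp (lam * Real.log (‖w ^ I‖ ^ 2)))
      (normSqPowMonomial 1 (lam * I) 0 0) {0}ᶜ := by
    intro w _
    dsimp only
    rw [normSqPowMonomial, zpow_zero, zpow_zero, one_mul, mul_one, mul_one, norm_pow, ← pow_mul,
      mul_comm I 2, pow_mul, Complex.sq_norm, Real.log_pow, ofReal_mul, ofReal_natCast, mul_assoc]
  have hprod (n : ℕ) : ∏ j ∈ Finset.range n, (lam * I + ((0 : ℤ) : ℂ) - j)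
      = lam ^ (if n = 0 then 0 else 1) *
        if n = 0 then 1 else (I : ℂ) * ∏ j ∈ Finset.Icc 1 (n - 1), (lam * I - (j : ℂ)) := by
    rcases eq_or_ne n 0 with rfl | hn
    · simp
    · rw [Int.cast_zero, add_zero, prod_range_sub_natCast _ hn, if_neg hn, if_neg hn]
      ring
  rw [hdef] at hne
  obtain ⟨hJ, hK⟩ := mul_ne_zero_iff.1 hne
  rw [eqOn_iterate_wdz (eqOn_iterate_wdzbar hf K) J hz, hprod, hprod, hdef]
  have hfz := hf hz
  simp only [normSqPowMonomial, zero_sub, zpow_neg, zpow_natCast, zpow_zero] at hfz ⊢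
  rw [hfz, pow_add]
  field_simp

/-- One-variable case of Lemma 2.3. -/
theorem stmt2 (I J K : ℕ) (hI : 1 ≤ I) (hJK : 1 ≤ J + K) (lam : ℂ) (hlam : lam ≠ 0)
    (hinv : ℂ)
    (hdef : hinv =
      (if J = 0 then 1 else (I : ℂ) * ∏ j ∈ Finset.Icc 1 (J - 1), (lam * I - (j : ℂ))) *
      (if K = 0 then 1 else (I : ℂ) * ∏ j ∈ Finset.Icc 1 (K - 1), (lam * I - (j : ℂ))))
    (hne : hinv ≠ 0) (z : ℂ) (hz : z ≠ 0) :
    Complex.exp (lam * Real.log (‖z ^ I‖ ^ 2)) / (z ^ J * (starRingEnd ℂ z) ^ K)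
      = hinv⁻¹ / lam ^ (((if J = 0 then 0 else 1) + (if K = 0 then 0 else 1) : ℕ)) *
        (wdz^[J] (wdzbar^[K]
          (fun w => Complex.exp (lam * Real.log (‖w ^ I‖ ^ 2))))) z :=
  stmt2_general I J K lam hlam hinv hdef hne z hz
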